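/- In Grigorchuk's first group G = ⟨a,b,c,d⟩ acting on the binary rooted tree via the wreath recursion a = ⟨1,1⟩ε, b = ⟨a,c⟩, c = ⟨a,d⟩, d = ⟨1,b⟩, consider the norm on words over {a,b,c,d} given by ‖a‖ = 1−η³, ‖b‖ = η³, ‖c‖ = 1−η², ‖d‖ = 1−η, where η is the real root of X³+X²+X−2, extended additively to words. If w is a pre-reduced word (no two consecutive letters from {b,c,d}) and w = ε^s⟨u,v⟩ under the wreath recursion applied letterwise, then ‖u‖ + ‖v‖ ≤ η‖w‖ + η‖a‖. -/
import Mathlib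


/-- The generators `a, b, c, d` of Grigorchuk's first group. -/
inductive GrigLetter | A | B | C | D
deriving DecidableEq

open GrigLetter

/-- The wreath recursion on letters, writing the image of a letter in the form
`ε^s⟨u,v⟩`: `a = ε⟨1,1⟩`, `b = ⟨a,c⟩`, `c = ⟨a,d⟩`, `d = ⟨1,b⟩`. -/
def letterImg : GrigLetter → Bool × List GrigLetter × List GrigLetter
  | A => (true, [], [])
  | B => (false, [A], [C])
  | C => (false, [A], [D])
  | D => (false, [], [B])

/-- The wreath recursion applied letterwise to a word `w`, producing
`(s, u, v)` with `w = ε^s⟨u,v⟩`. -/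
def wordImg : List GrigLetter → Bool × List GrigLetter × List GrigLetter
  | [] => (false, [], [])
  | t :: w =>
    let (s', u', v') := wordImg w
    let (st, ut, vt) := letterImg t
    (xor st s', (if s' then vt else ut) ++ u', (if s' then ut else vt) ++ v')

/-- The weight of a letter: `‖a‖ = 1 - η³`, `‖b‖ = η³`, `‖c‖ = 1 - η²`,
`‖d‖ = 1 - η`. -/
def letterNorm (η : ℝ) : GrigLetter → ℝ
  | A => 1 - η ^ 3
  | B => η ^ 3
  | C => 1 - η ^ 2
  | D => 1 - η

/-- The weight of a word, extended additively. -/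
def wordNorm (η : ℝ) (w : List GrigLetter) : ℝ := (w.map (letterNorm η)).sum

/-- `w` is pre-reduced: no two consecutive letters from `{b,c,d}`. -/
def PreReduced (w : List GrigLetter) : Prop :=
  List.Chain' (fun x y => x = A ∨ y = A) w

/-- Sign of a letter: `-1` for `a`, `+1` for `b,c,d`. -/
def letterSgn : GrigLetter → ℝ
  | A => -1
  | _ => 1

def wordSgn (w : List GrigLetter) : ℝ := (w.map letterSgn).sum

lemma wordNorm_nil (η : ℝ) : wordNorm η [] = 0 := rfl

lemma wordNorm_cons (η : ℝ) (t : GrigLetter) (w : List GrigLetter) :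
    wordNorm η (t :: w) = letterNorm η t + wordNorm η w := rfl

lemma wordNorm_append (η : ℝ) (u v : List GrigLetter) :
    wordNorm η (u ++ v) = wordNorm η u + wordNorm η v := by
  simp [wordNorm]

lemma wordSgn_le_one : ∀ w : List GrigLetter, PreReduced w → wordSgn w ≤ 1 ∧
    (w = [] ∨ w.head? = some A → wordSgn w ≤ 0) := by
  intro w
  induction w with
  | nil => exact fun _ => ⟨by norm_num [wordSgn], fun _ => by norm_num [wordSgn]⟩
  | cons t w ih =>
    intro hw
    have hw' : PreReduced w := (List.isChain_cons.mp hw).2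
    have ihw := ih hw'
    match t with
    | A =>
      have : wordSgn (A :: w) = -1 + wordSgn w := by simp [wordSgn, letterSgn]
      constructor
      · rw [this]; linarith [ihw.1]
      · intro _; rw [this]; linarith [ihw.1]
    | B | C | D =>
      have hs : wordSgn w ≤ 0 := by
        apply ihw.2
        match w, hw with
        | [], _ => exact Or.inl rfl
        | x :: w', hw =>
          rcases (List.isChain_cons_cons.mp hw).1 with h | h
          · exact absurd h (by simp)
          · exact Or.inr (by simp [h])
      constructor
      · show (1 : ℝ) + wordSgn w ≤ 1; linarith
      · intro h; rcases h with h | h <;> simp_all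

lemma key_identity (η : ℝ) (hη : η ^ 3 + η ^ 2 + η - 2 = 0) :
    ∀ w : List GrigLetter,
    wordNorm η (wordImg w).2.1 + wordNorm η (wordImg w).2.2
      = η * wordNorm η w + (η * letterNorm η A) * wordSgn w := by
  intro w
  induction w with
  | nil => simp [wordImg, wordNorm, wordSgn]
  | cons t w ih =>
    rcases hwi : wordImg w with ⟨s', u', v'⟩
    have h1 : wordNorm η (wordImg (t :: w)).2.1 + wordNorm η (wordImg (t :: w)).2.2
        = wordNorm η (letterImg t).2.1 + wordNorm η (letterImg t).2.2
          + (wordNorm η u' + wordNorm η v') := by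
      simp only [wordImg, hwi]
      obtain ⟨st, ut, vt⟩ := letterImg t
      cases s' <;> simp [wordNorm_append] <;> ring
    have h2 : wordNorm η u' + wordNorm η v'
        = η * wordNorm η w + (η * letterNorm η A) * wordSgn w := by
      have := ih; rw [hwi] at this; exact this
    have h3 : wordSgn (t :: w) = letterSgn t + wordSgn w := by simp [wordSgn]
    rw [h1, h2, wordNorm_cons, h3]
    cases t <;> simp [letterImg, letterNorm, letterSgn, wordNorm] <;> nlinarith [hη]

/-- For `η` the real root of `X³ + X² + X - 2` and a pre-reduced word `w` with
`w = ε^s⟨u,v⟩` under the letterwise wreath recursion,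
`‖u‖ + ‖v‖ ≤ η ‖w‖ + η ‖a‖`. -/
theorem grig_word_contraction (η : ℝ) (hη : η ^ 3 + η ^ 2 + η - 2 = 0)
    (w : List GrigLetter) (hw : PreReduced w) :
    wordNorm η (wordImg w).2.1 + wordNorm η (wordImg w).2.2
      ≤ η * wordNorm η w + η * letterNorm η A := by
  have hpos : 0 < η := by nlinarith [sq_nonneg η, sq_nonneg (η + 1)]
  have ha : 0 ≤ letterNorm η A := by
    show (0 : ℝ) ≤ 1 - η ^ 3
    nlinarith [sq_nonneg (η - 1), sq_nonneg η, sq_nonneg (η + 1)]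
  have hs := (wordSgn_le_one w hw).1
  rw [key_identity η hη w]
  have : (η * letterNorm η A) * wordSgn w ≤ (η * letterNorm η A) * 1 :=
    mul_le_mul_of_nonneg_left hs (by positivity)
  linarith
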